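/- The minimum number of monotone single-element block moves needed to sort a permutation π of n elements to the identity equals n − lis(π), where lis(π) is the length of the longest increasing subsequence of π. -/

import Mathlib

/-!
A single-element move displaces one entry, and deleting that entry from an increasing
subsequence of the new list leaves an increasing subsequence of the old one. So `lis` grows by
at most one per move, and sorting takes at least `n - lis π` moves.

Conversely, let `s` be a longest increasing subsequence and `v ∉ s`. Since `v` cannot be
inserted into `s` where it stands, a larger member of `s` precedes it or a smaller one follows
it; reversing both the list and the order swaps the two cases, so assume the first. Take `v`
least with this property and then `u` least among the larger members of `s` before `v`. Every
entry strictly between `u` and `v` then exceeds `v`, and every member of `s` before `u` is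
below `v`, so moving `v` to just before `u` is a monotone single-element move that extends `s`
by `v`.
-/

/-- The identity permutation of `{1,…,n}` as a list `[1, 2, …, n]`. -/
def idL (n : ℕ) : List ℕ := (List.range n).map (· + 1)

/-- `l` is a permutation of `{1,…,n}` (written as a list). -/
def IsPermList (n : ℕ) (l : List ℕ) : Prop := l.Perm (idL n)

/-- The extension of `π` by `π₀ = 0` and `π_{n+1} = n+1`. -/
def ext (n : ℕ) (l : List ℕ) : List ℕ := 0 :: (l ++ [n + 1])

/-- Number of adjacent pairs of the extended permutation satisfying `p`. -/
def adjCount (p : ℕ → ℕ → Bool) (n : ℕ) (l : List ℕ) : ℕ :=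
  ((ext n l).zip (ext n l).tail).countP (fun q => p q.1 q.2)

/-- Number of breakpoints: adjacent pairs with `π_{i+1} ≠ π_i + 1`. -/
def bp (n : ℕ) (l : List ℕ) : ℕ := adjCount (fun a b => b ≠ a + 1) n l

/-- Number of descents: adjacent pairs with `π_i > π_{i+1}`. -/
def des (n : ℕ) (l : List ℕ) : ℕ := adjCount (fun a b => b < a) n l

/-- Number of gaps: adjacent pairs with `π_{i+1} > π_i + 1`. -/
def gap (n : ℕ) (l : List ℕ) : ℕ := adjCount (fun a b => a + 1 < b) n l

/-- Number of inverse descents: pairs of positions `i < j` with `π_i = π_j + 1`. -/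
def invDes (l : List ℕ) : ℕ :=
  (Finset.univ.filter (fun p : Fin l.length × Fin l.length =>
    (p.1 : ℕ) < (p.2 : ℕ) ∧ l.get p.1 = l.get p.2 + 1)).card

/-- Number of inverse gaps: pairs of positions with `i > j + 1` and `π_i = π_j + 1`. -/
def invGap (l : List ℕ) : ℕ :=
  (Finset.univ.filter (fun p : Fin l.length × Fin l.length =>
    (p.2 : ℕ) + 1 < (p.1 : ℕ) ∧ l.get p.1 = l.get p.2 + 1)).card

/-- `l'` is obtained from `l` by a block move: exchanging two nonempty
consecutive blocks `B` and `C`. -/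
def IsBlockMove (l l' : List ℕ) : Prop :=
  ∃ A B C D : List ℕ, B ≠ [] ∧ C ≠ [] ∧ l = A ++ B ++ C ++ D ∧ l' = A ++ C ++ B ++ D

/-- A monotone block move: every element of the first (left) exchanged block
exceeds every element of the second (right) exchanged block. -/
def IsMonotoneBlockMove (l l' : List ℕ) : Prop :=
  ∃ A B C D : List ℕ, B ≠ [] ∧ C ≠ [] ∧ (∀ x ∈ B, ∀ y ∈ C, y < x) ∧
    l = A ++ B ++ C ++ D ∧ l' = A ++ C ++ B ++ D

/-- A single-element block move: one of the two exchanged blocks has size one. -/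
def IsSingleBlockMove (l l' : List ℕ) : Prop :=
  ∃ A B C D : List ℕ, B ≠ [] ∧ C ≠ [] ∧ (B.length = 1 ∨ C.length = 1) ∧
    l = A ++ B ++ C ++ D ∧ l' = A ++ C ++ B ++ D

/-- A monotone single-element block move. -/
def IsMonoSingleBlockMove (l l' : List ℕ) : Prop :=
  ∃ A B C D : List ℕ, B ≠ [] ∧ C ≠ [] ∧ (B.length = 1 ∨ C.length = 1) ∧
    (∀ x ∈ B, ∀ y ∈ C, y < x) ∧ l = A ++ B ++ C ++ D ∧ l' = A ++ C ++ B ++ D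

/-- `l` can be transformed into `target` by `t` moves of type `R`. -/
def SortsIn (R : List ℕ → List ℕ → Prop) (l target : List ℕ) (t : ℕ) : Prop :=
  ∃ c : ℕ → List ℕ, c 0 = l ∧ c t = target ∧ ∀ i < t, R (c i) (c (i + 1))

/-- Length of the longest increasing subsequence of `l`. -/
def lis (l : List ℕ) : ℕ :=
  ((l.sublists.filter (fun s => decide (List.IsChain (· < ·) s))).map List.length).foldr max 0

open List

namespace List

variable {α β : Type*}

theorem sublist_append_of_sublist_append_cons {t A B : List α} {x : α}
    (h : t <+ A ++ x :: B) (hx : x ∉ t) : t <+ A ++ B := by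
  obtain ⟨t₁, t₂, rfl, h₁, h₂⟩ := sublist_append_iff.1 h
  obtain h₂ | ⟨t₂, rfl, -⟩ := sublist_cons_iff.1 h₂
  · exact h₁.append h₂
  · simp at hx

theorem exists_sublist_append_of_sublist_append_cons {t A B : List α} {x : α}
    (h : t <+ A ++ x :: B) : ∃ t', t' <+ t ∧ t' <+ A ++ B ∧ t.length ≤ t'.length + 1 := by
  obtain ⟨t₁, t₂, rfl, h₁, h₂⟩ := sublist_append_iff.1 h
  refine ⟨t₁ ++ t₂.tail, (tail_sublist t₂).append_left t₁, h₁.append h₂.tail, ?_⟩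
  simp only [length_append, length_tail]
  omega

theorem exists_eq_append_cons_of_sublist_append_cons {s A R : List α} {u : α}
    (h : s <+ A ++ u :: R) (hu : u ∈ s) (huA : u ∉ A) (huR : u ∉ R) :
    ∃ s₁ s₂, s = s₁ ++ u :: s₂ ∧ s₁ <+ A ∧ s₂ <+ R := by
  obtain ⟨s₁, s₂, rfl, h₁, h₂⟩ := sublist_append_iff.1 h
  obtain h₂ | ⟨s₂, rfl, hs₂⟩ := sublist_cons_iff.1 h₂
  · rcases mem_append.1 hu with hu | hu
    exacts [(huA (h₁.subset hu)).elim, (huR (h₂.subset hu)).elim]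
  · exact ⟨s₁, s₂, rfl, h₁, hs₂⟩

theorem exists_eq_append_cons_append_cons_of_pair_sublist {l : List α} {u v : α}
    (h : [u, v] <+ l) : ∃ A M D, l = A ++ u :: M ++ v :: D := by
  obtain ⟨r₁, r₂, rfl, hu, hv⟩ := cons_sublist_iff.1 h
  obtain ⟨A, M₁, rfl⟩ := append_of_mem hu
  obtain ⟨M₂, D, rfl⟩ := append_of_mem (singleton_sublist.1 hv)
  exact ⟨A, M₁ ++ M₂, D, by simp⟩

theorem pair_sublist_append_cons {A R : List α} {x y : α} (hx : x ∈ A) (hy : y ∈ R) :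
    [x, y] <+ A ++ R :=
  cons_sublist_iff.2 ⟨A, R, rfl, hx, singleton_sublist.2 hy⟩

theorem pairwise_lt_append_cons [Preorder α] {s₁ s₂ : List α} {v : α}
    (h₁ : s₁.Pairwise (· < ·)) (h₂ : s₂.Pairwise (· < ·)) (hlt : ∀ x ∈ s₁, x < v)
    (hgt : ∀ y ∈ s₂, v < y) : (s₁ ++ v :: s₂).Pairwise (· < ·) := by
  refine pairwise_append.2 ⟨h₁, pairwise_cons.2 ⟨hgt, h₂⟩, ?_⟩
  intro x hx y hy
  rcases mem_cons.1 hy with rfl | hy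
  exacts [hlt x hx, (hlt x hx).trans (hgt y hy)]

theorem Pairwise.reverse_map_of_strictAnti [Preorder α] [Preorder β] {f : α → β}
    (hf : StrictAnti f) {l : List α} (h : l.Pairwise (· < ·)) :
    (l.reverse.map f).Pairwise (· < ·) := by
  rw [pairwise_map, pairwise_reverse]
  exact h.imp fun hab => hf hab

end List

section Order

variable {α β : Type*}

def MonoSingleMove [LT α] (l l' : List α) : Prop :=
  ∃ A B C D : List α, B ≠ [] ∧ C ≠ [] ∧ (B.length = 1 ∨ C.length = 1) ∧
    (∀ x ∈ B, ∀ y ∈ C, y < x) ∧ l = A ++ B ++ C ++ D ∧ l' = A ++ C ++ B ++ D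

theorem MonoSingleMove.perm [LT α] {l l' : List α} (h : MonoSingleMove l l') : l.Perm l' := by
  obtain ⟨A, B, C, D, -, -, -, -, rfl, rfl⟩ := h
  simpa using (perm_append_comm.append_left A).append_right D

theorem MonoSingleMove.reverse_map [Preorder α] [Preorder β] {f : α → β} (hf : StrictAnti f)
    {l l' : List α} (h : MonoSingleMove l l') :
    MonoSingleMove (l.reverse.map f) (l'.reverse.map f) := by
  obtain ⟨A, B, C, D, hB, hC, hone, hlt, rfl, rfl⟩ := h
  refine ⟨D.reverse.map f, C.reverse.map f, B.reverse.map f, A.reverse.map f,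
    by simpa using hC, by simpa using hB, by simpa using hone.symm, ?_, by simp, by simp⟩
  simp only [mem_map, mem_reverse]
  rintro _ ⟨c, hc, rfl⟩ _ ⟨b, hb, rfl⟩
  exact hf (hlt b hb c hc)

end Order

section LinearOrder

variable {α : Type*} [LinearOrder α]

open OrderDual

theorem exists_monoSingleMove_of_block {A M D s : List α} {u v : α}
    (hl : (A ++ u :: M ++ v :: D).Nodup) (hs : s <+ A ++ u :: M ++ v :: D)
    (hsort : s.Pairwise (· < ·)) (hu : u ∈ s) (hvu : v < u)
    (hM : ∀ w ∈ M, w ∉ s → v < w) (hA : ∀ x ∈ A, x ∈ s → x < u → x < v) :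
    ∃ l', MonoSingleMove (A ++ u :: M ++ v :: D) l' ∧
      ∃ t, t <+ l' ∧ t.Pairwise (· < ·) ∧ t.length = s.length + 1 := by
  simp only [append_assoc, cons_append] at hl hs ⊢
  have hdisj := disjoint_of_nodup_append hl
  have huR := (nodup_cons.1 hl.of_append_right).1
  obtain ⟨s₁, s₂, rfl, h₁, h₂⟩ := exists_eq_append_cons_of_sublist_append_cons hs hu
    (fun h => hdisj h mem_cons_self) huR
  obtain ⟨hs₁, ⟨hus₂, hs₂⟩, hs₁u⟩ := by simpa only [pairwise_append, pairwise_cons] using hsort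
  have hMD : s₂ <+ M ++ D :=
    sublist_append_of_sublist_append_cons h₂ fun hv => lt_asymm hvu (hus₂ v hv)
  have hMv : ∀ w ∈ M, v < w := by
    intro w hw
    by_cases hws : w ∈ s₁ ++ u :: s₂
    · rcases mem_append.1 hws with hw₁ | hw₂
      · exact (hdisj (h₁.subset hw₁) (mem_cons_of_mem _ (mem_append_left _ hw))).elim
      · rcases mem_cons.1 hw₂ with rfl | hw₂
        · exact (huR (mem_append_left _ hw)).elim
        · exact hvu.trans (hus₂ w hw₂)
    · exact hM w hw hws
  refine ⟨A ++ v :: u :: (M ++ D), ⟨A, u :: M, [v], D, cons_ne_nil _ _, cons_ne_nil _ _,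
    .inr rfl, ?_, by simp, by simp⟩, s₁ ++ v :: u :: s₂,
    h₁.append ((hMD.cons_cons u).cons_cons v), ?_, by simp only [length_append, length_cons]; omega⟩
  · simpa using ⟨hvu, hMv⟩
  · refine pairwise_lt_append_cons hs₁ (pairwise_cons.2 ⟨hus₂, hs₂⟩) ?_ ?_
    · exact fun x hx => hA x (h₁.subset hx) (mem_append_left _ hx) (hs₁u x hx u (.head _))
    · simpa using ⟨hvu, fun y hy => hvu.trans (hus₂ y hy)⟩

theorem exists_monoSingleMove_of_larger_before {l s : List α} (hl : l.Nodup) (hs : s <+ l)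
    (hsort : s.Pairwise (· < ·)) {u v : α} (hu : u ∈ s) (hv : v ∉ s) (hvu : v < u)
    (huv : [u, v] <+ l) :
    ∃ l', MonoSingleMove l l' ∧ ∃ t, t <+ l' ∧ t.Pairwise (· < ·) ∧ t.length = s.length + 1 := by
  classical
  obtain ⟨v, hvV, hvmin⟩ := (l.toFinset.filter fun w => w ∉ s ∧ ∃ u ∈ s, w < u ∧ [u, w] <+ l)
    |>.exists_min_image id ⟨v, by simpa using ⟨huv.subset (by simp), hv, u, hu, hvu, huv⟩⟩
  simp only [Finset.mem_filter, mem_toFinset, id] at hvV hvmin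
  obtain ⟨-, hv, hex⟩ := hvV
  obtain ⟨u, huU, humin⟩ := (s.toFinset.filter fun u => v < u ∧ [u, v] <+ l).exists_min_image id
    (by obtain ⟨u, hu, h⟩ := hex; exact ⟨u, by simpa using ⟨hu, h⟩⟩)
  simp only [Finset.mem_filter, mem_toFinset, id] at huU humin
  obtain ⟨hu, hvu, huv⟩ := huU
  obtain ⟨A, M, D, rfl⟩ := exists_eq_append_cons_append_cons_of_pair_sublist huv
  refine exists_monoSingleMove_of_block hl hs hsort hu hvu ?_ ?_
  · intro w hw hws
    have hwv : w ≠ v := by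
      rintro rfl
      exact nodup_iff_sublist.1 hl w
        (pair_sublist_append_cons (A := A ++ u :: M) (by simp [hw]) (by simp))
    refine lt_of_le_of_ne (not_lt.1 fun hwv' => ?_) hwv.symm
    refine (hvmin w ⟨?_, hws, u, hu, hwv'.trans hvu, ?_⟩).not_gt hwv'
    · simp [hw]
    · simpa using pair_sublist_append_cons (A := A ++ [u]) (R := M ++ v :: D) (by simp)
        (by simp [hw])
  · intro x hx hxs hxu
    refine lt_of_le_of_ne (not_lt.1 fun hvx => ?_) fun h => hv (h ▸ hxs)
    refine (humin x ⟨hxs, hvx, ?_⟩).not_gt hxu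
    simpa using pair_sublist_append_cons (A := A) (R := u :: M ++ v :: D) hx (by simp)

theorem exists_monoSingleMove_of_smaller_after {l s : List α} (hl : l.Nodup) (hs : s <+ l)
    (hsort : s.Pairwise (· < ·)) {u v : α} (hu : u ∈ s) (hv : v ∉ s) (huv : u < v)
    (hvu : [v, u] <+ l) :
    ∃ l', MonoSingleMove l l' ∧ ∃ t, t <+ l' ∧ t.Pairwise (· < ·) ∧ t.length = s.length + 1 := by
  have hanti : StrictAnti (toDual : α → αᵒᵈ) := fun _ _ h => h
  obtain ⟨l', hmove, t, ht, htsort, htlen⟩ :=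
    exists_monoSingleMove_of_larger_before (Nodup.map toDual.injective (nodup_reverse.2 hl))
      (hs.reverse.map toDual) (hsort.reverse_map_of_strictAnti hanti)
      (u := toDual u) (v := toDual v) (by simpa using hu) (by simpa using hv) huv
      (by simpa using (reverse_sublist.2 hvu).map toDual)
  refine ⟨l'.reverse.map ofDual, by simpa using hmove.reverse_map (f := ofDual) fun _ _ h => h,
    t.reverse.map ofDual, (reverse_sublist.2 ht).map ofDual,
    htsort.reverse_map_of_strictAnti fun _ _ h => h, by simpa using htlen⟩

theorem exists_larger_before_or_smaller_after {l s : List α} (hs : s <+ l)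
    (hsort : s.Pairwise (· < ·)) (hmax : ∀ t, t <+ l → t.Pairwise (· < ·) → t.length ≤ s.length)
    {v : α} (hvl : v ∈ l) (hv : v ∉ s) :
    (∃ u ∈ s, v < u ∧ [u, v] <+ l) ∨ ∃ u ∈ s, u < v ∧ [v, u] <+ l := by
  obtain ⟨P, Q, rfl⟩ := append_of_mem hvl
  obtain ⟨s₁, s₂, rfl, h₁, h₂⟩ := sublist_append_iff.1 (sublist_append_of_sublist_append_cons hs hv)
  have hne : ∀ x ∈ s₁ ++ s₂, x ≠ v := fun x hx h => hv (h ▸ hx)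
  by_cases hlt : ∀ x ∈ s₁, x < v
  · by_cases hgt : ∀ y ∈ s₂, v < y
    · have hsort' := pairwise_append.1 hsort
      have := hmax _ (h₁.append (h₂.cons_cons v))
        (pairwise_lt_append_cons hsort'.1 hsort'.2.1 hlt hgt)
      simp at this
    · push Not at hgt
      obtain ⟨y, hy, hyv⟩ := hgt
      refine .inr ⟨y, mem_append_right _ hy, lt_of_le_of_ne hyv (hne y (mem_append_right _ hy)), ?_⟩
      simpa using pair_sublist_append_cons (A := P ++ [v]) (R := Q) (by simp) (h₂.subset hy)
  · push Not at hlt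
    obtain ⟨x, hx, hvx⟩ := hlt
    refine .inl ⟨x, mem_append_left _ hx,
      lt_of_le_of_ne hvx (hne x (mem_append_left _ hx)).symm, ?_⟩
    exact pair_sublist_append_cons (h₁.subset hx) (by simp)

theorem exists_monoSingleMove_of_length_lt {l s : List α} (hl : l.Nodup) (hs : s <+ l)
    (hsort : s.Pairwise (· < ·)) (hmax : ∀ t, t <+ l → t.Pairwise (· < ·) → t.length ≤ s.length)
    (hlt : s.length < l.length) :
    ∃ l', MonoSingleMove l l' ∧ ∃ t, t <+ l' ∧ t.Pairwise (· < ·) ∧ t.length = s.length + 1 := by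
  obtain ⟨v, hvl, hv⟩ : ∃ v ∈ l, v ∉ s := by
    by_contra! h
    exact (hl.subperm h).length_le.not_gt hlt
  obtain ⟨u, hu, hvu, huv⟩ | ⟨u, hu, huv, hvu⟩ :=
    exists_larger_before_or_smaller_after hs hsort hmax hvl hv
  exacts [exists_monoSingleMove_of_larger_before hl hs hsort hu hv hvu huv,
    exists_monoSingleMove_of_smaller_after hl hs hsort hu hv huv hvu]

end LinearOrder

theorem isMonoSingleBlockMove_iff {l l' : List ℕ} :
    IsMonoSingleBlockMove l l' ↔ MonoSingleMove l l' := Iff.rfl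

theorem IsMonoSingleBlockMove.isSingleBlockMove {l l' : List ℕ} (h : IsMonoSingleBlockMove l l') :
    IsSingleBlockMove l l' := by
  obtain ⟨A, B, C, D, hB, hC, hone, -, hl, hl'⟩ := h
  exact ⟨A, B, C, D, hB, hC, hone, hl, hl'⟩

theorem length_le_lis {s l : List ℕ} (hs : s <+ l) (hsort : s.Pairwise (· < ·)) :
    s.length ≤ lis l :=
  le_max_of_le' 0 (mem_map.2 ⟨s, mem_filter.2 ⟨mem_sublists.2 hs,
    by simpa [isChain_iff_pairwise] using hsort⟩, rfl⟩) le_rfl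

theorem exists_sublist_length_eq_lis (l : List ℕ) :
    ∃ s, s <+ l ∧ s.Pairwise (· < ·) ∧ s.length = lis l := by
  set L := (l.sublists.filter fun s => decide (List.IsChain (· < ·) s)).map length
  have hL : L ≠ [] := ne_nil_of_mem (a := 0) (mem_map.2 ⟨[], by simp, rfl⟩)
  have hmax : (lis l : WithBot ℕ) = L.maximum := foldr_max_of_ne_nil hL
  obtain ⟨s, hs, hlen⟩ := mem_map.1 (maximum_mem hmax.symm)
  obtain ⟨hs, hsort⟩ := mem_filter.1 hs
  exact ⟨s, mem_sublists.1 hs, by simpa [isChain_iff_pairwise] using hsort, hlen⟩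

theorem lis_le_length (l : List ℕ) : lis l ≤ l.length := by
  obtain ⟨s, hs, -, hlen⟩ := exists_sublist_length_eq_lis l
  exact hlen ▸ hs.length_le

theorem lis_mono {s l : List ℕ} (h : s <+ l) : lis s ≤ lis l := by
  obtain ⟨t, ht, htsort, hlen⟩ := exists_sublist_length_eq_lis s
  exact hlen ▸ length_le_lis (ht.trans h) htsort

theorem lis_append_cons_le (A B : List ℕ) (x : ℕ) : lis (A ++ x :: B) ≤ lis (A ++ B) + 1 := by
  obtain ⟨t, ht, htsort, hlen⟩ := exists_sublist_length_eq_lis (A ++ x :: B)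
  obtain ⟨t', ht't, ht', hle⟩ := exists_sublist_append_of_sublist_append_cons ht
  have := length_le_lis ht' (htsort.sublist ht't)
  omega

theorem IsSingleBlockMove.lis_le {l l' : List ℕ} (h : IsSingleBlockMove l l') :
    lis l' ≤ lis l + 1 := by
  obtain ⟨A, B, C, D, -, -, hB | hC, rfl, rfl⟩ := h
  · obtain ⟨b, rfl⟩ := length_eq_one_iff.1 hB
    calc lis (A ++ C ++ [b] ++ D) = lis (A ++ C ++ b :: D) := by simp
      _ ≤ lis (A ++ C ++ D) + 1 := lis_append_cons_le _ _ _
      _ ≤ lis (A ++ [b] ++ C ++ D) + 1 := Nat.add_le_add_right (lis_mono (by simp)) 1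
  · obtain ⟨c, rfl⟩ := length_eq_one_iff.1 hC
    calc lis (A ++ [c] ++ B ++ D) = lis (A ++ c :: (B ++ D)) := by simp
      _ ≤ lis (A ++ (B ++ D)) + 1 := lis_append_cons_le _ _ _
      _ ≤ lis (A ++ B ++ [c] ++ D) + 1 := Nat.add_le_add_right (lis_mono (by simp)) 1

theorem pairwise_idL (n : ℕ) : (idL n).Pairwise (· < ·) := by
  simpa [idL, pairwise_map] using pairwise_lt_range (n := n)

theorem length_idL (n : ℕ) : (idL n).length = n := by simp [idL]

theorem lis_idL (n : ℕ) : lis (idL n) = n :=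
  le_antisymm ((lis_le_length _).trans_eq (length_idL n))
    ((length_idL n).symm.trans_le (length_le_lis (.refl _) (pairwise_idL n)))

theorem IsPermList.length_eq {n : ℕ} {l : List ℕ} (hl : IsPermList n l) : l.length = n :=
  (Perm.length_eq hl).trans (length_idL n)

theorem IsPermList.lis_le {n : ℕ} {l : List ℕ} (hl : IsPermList n l) : lis l ≤ n :=
  hl.length_eq ▸ lis_le_length l

theorem IsPermList.eq_idL_of_lis_eq {n : ℕ} {l : List ℕ} (hl : IsPermList n l)
    (h : lis l = n) : l = idL n := by
  obtain ⟨s, hs, hsort, hlen⟩ := exists_sublist_length_eq_lis l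
  obtain rfl := hs.eq_of_length (by rw [hlen, h, hl.length_eq])
  exact Perm.eq_of_pairwise' hsort (pairwise_idL n) hl

theorem IsPermList.exists_isMonoSingleBlockMove_lis_eq_succ {n : ℕ} {l : List ℕ}
    (hl : IsPermList n l) (hlt : lis l < n) :
    ∃ l', IsMonoSingleBlockMove l l' ∧ IsPermList n l' ∧ lis l' = lis l + 1 := by
  obtain ⟨s, hs, hsort, hlen⟩ := exists_sublist_length_eq_lis l
  obtain ⟨l', hmove, t, ht, htsort, htlen⟩ := exists_monoSingleMove_of_length_lt
    ((Perm.nodup_iff hl).2 (pairwise_idL n).nodup) hs hsort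
    (fun t ht htsort => hlen ▸ length_le_lis ht htsort) (by rw [hlen, hl.length_eq]; exact hlt)
  refine ⟨l', hmove, hmove.perm.symm.trans hl, le_antisymm ?_ ?_⟩
  · exact (isMonoSingleBlockMove_iff.2 hmove).isSingleBlockMove.lis_le
  · exact hlen ▸ htlen ▸ length_le_lis ht htsort

theorem SortsIn.zero (R : List ℕ → List ℕ → Prop) (l : List ℕ) : SortsIn R l l 0 :=
  ⟨fun _ => l, rfl, rfl, fun _ h => absurd h (Nat.not_lt_zero _)⟩

theorem SortsIn.cons {R : List ℕ → List ℕ → Prop} {l l' target : List ℕ} {t : ℕ} (h : R l l')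
    (h' : SortsIn R l' target t) : SortsIn R l target (t + 1) := by
  obtain ⟨c, rfl, hct, hc⟩ := h'
  refine ⟨fun | 0 => l | i + 1 => c i, rfl, hct, ?_⟩
  rintro (_ | i) hi
  exacts [h, hc i (by omega)]

theorem SortsIn.le_add {R : List ℕ → List ℕ → Prop} {f : List ℕ → ℕ}
    (hf : ∀ a b, R a b → f b ≤ f a + 1) {l target : List ℕ} {t : ℕ}
    (h : SortsIn R l target t) : f target ≤ f l + t := by
  obtain ⟨c, rfl, rfl, hc⟩ := h
  suffices ∀ i ≤ t, f (c i) ≤ f (c 0) + i from this t le_rfl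
  intro i hi
  induction i with
  | zero => simp
  | succ i ih => have := hf _ _ (hc i hi); have := ih (by omega); omega

theorem IsPermList.sortsIn_idL {n : ℕ} {l : List ℕ} (hl : IsPermList n l) :
    SortsIn IsMonoSingleBlockMove l (idL n) (n - lis l) := by
  induction h : n - lis l generalizing l with
  | zero =>
    rw [hl.eq_idL_of_lis_eq (by have := hl.lis_le; omega)]
    exact .zero _ _
  | succ k ih =>
    obtain ⟨l', hmove, hl', hlis⟩ := hl.exists_isMonoSingleBlockMove_lis_eq_succ (by omega)
    exact .cons hmove (ih hl' (by omega))

/-- The minimum number of monotone single-element block moves needed to sort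
`π` to the identity equals `n - lis(π)`. -/
theorem bc1_eq_n_sub_lis (n : ℕ) (l : List ℕ) (hl : IsPermList n l) :
    IsLeast {t : ℕ | SortsIn IsMonoSingleBlockMove l (idL n) t} (n - lis l) := by
  refine ⟨hl.sortsIn_idL, fun t ht => ?_⟩
  have := ht.le_add fun _ _ h => h.isSingleBlockMove.lis_le
  rw [lis_idL] at this
  omega
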